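/- Let P be the uniform distribution on [a,b] with a < b, and let β = {a}. For every n ∈ ℕ with n ≥ 1, the n-th conditional unconstrained quantization error for P with respect to β equals (b−a)²/(3(2n−1)²), and this infimum is attained by the set {a + 2(j−1)(b−a)/(2n−1) : 1 ≤ j ≤ n}. -/

import Mathlib

open MeasureTheory Set Filter

/-- The uniform distribution on `[a, b]`: normalized Lebesgue measure restricted to `[a, b]`. -/
noncomputable def uniformOn (a b : ℝ) : Measure ℝ :=
  (ENNReal.ofReal (b - a))⁻¹ • volume.restrict (Set.Icc a b)

/-- The distortion error of a set `s` of points for the measure `P`. -/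
noncomputable def distortion (P : Measure ℝ) (s : Set ℝ) : ℝ :=
  ∫ x, sInf ((fun a => (x - a) ^ 2) '' s) ∂P

/-- The `n`-th conditional (unconstrained) quantization error for `P` with respect to
the conditional set `β`. -/
noncomputable def condQuantError (P : Measure ℝ) (β : Set ℝ) (n : ℕ) : ℝ :=
  sInf { v : ℝ | ∃ α : Set ℝ, α.Finite ∧ α.ncard ≤ n - β.ncard ∧ v = distortion P (α ∪ β) }

/-!
Removing the largest point `a` of a finite set `s` splits an interval `[u, v]` at the midpoint
between `a` and its predecessor: to the left the squared distance to `s` is that to `s \ {a}`,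
to the right it is `(x - a)²`, which integrates to at least `ℓ³/12` over an interval of length `ℓ`.
If some point of `s` lies at or to the left of `u`, that point owns only half a cell, and induction
on `#s` together with the convexity inequality `(p + q)³/(A + B)² ≤ p³/A² + q³/B²` gives
`(v - u)³/(3(2#s - 1)²) ≤ ∫ x in u..v, sqInfDist x s`. The grid `a, a + 2r, …, a + 2(n - 1)r`
with `(2n - 1)r = b - a` attains the bound: its first cell has length `r` and all others `2r`,
which makes every inequality above an equality.
-/

lemma cube_div_sq_add_le {A B p q : ℝ} (hA : 0 < A) (hB : 0 < B) (hp : 0 ≤ p) (hq : 0 ≤ q) :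
    (p + q) ^ 3 / (A + B) ^ 2 ≤ p ^ 3 / A ^ 2 + q ^ 3 / B ^ 2 := by
  rw [div_add_div _ _ (by positivity) (by positivity),
    div_le_div_iff₀ (by positivity) (by positivity)]
  nlinarith [mul_pos hA hB, mul_nonneg (mul_nonneg (sq_nonneg (p * B - q * A)) hp) hB.le,
    mul_nonneg (mul_nonneg (sq_nonneg (p * B - q * A)) hq) hA.le,
    mul_nonneg (mul_nonneg (sq_nonneg (p * B - q * A)) hp) hA.le,
    mul_nonneg (mul_nonneg (sq_nonneg (p * B - q * A)) hq) hB.le]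

lemma integral_sub_sq (t u v : ℝ) : ∫ x in u..v, (x - t) ^ 2 = ((v - t) ^ 3 - (u - t) ^ 3) / 3 := by
  rw [intervalIntegral.integral_comp_sub_right (fun x => x ^ 2), integral_pow]
  ring

lemma div_twelve_le_integral_sub_sq (t : ℝ) {u v : ℝ} (huv : u ≤ v) :
    (v - u) ^ 3 / 12 ≤ ∫ x in u..v, (x - t) ^ 2 := by
  rw [integral_sub_sq]
  nlinarith [mul_nonneg (sub_nonneg.2 huv) (sq_nonneg (u - t + (v - u) / 2))]

lemma div_three_le_integral_sub_sq {t u v : ℝ} (htu : t ≤ u) (huv : u ≤ v) :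
    (v - u) ^ 3 / 3 ≤ ∫ x in u..v, (x - t) ^ 2 := by
  rw [integral_sub_sq]
  nlinarith [mul_nonneg (mul_nonneg (sub_nonneg.2 huv) (sub_nonneg.2 htu))
    (sub_nonneg.2 (htu.trans huv))]

open scoped Finset

noncomputable def sqInfDist (x : ℝ) (s : Finset ℝ) : ℝ :=
  sInf ((fun t => (x - t) ^ 2) '' (s : Set ℝ))

section sqInfDist

variable {s : Finset ℝ} {x a t₀ : ℝ}

lemma sqInfDist_singleton (x a : ℝ) : sqInfDist x {a} = (x - a) ^ 2 := by
  simp [sqInfDist]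

lemma sqInfDist_le {t : ℝ} (ht : t ∈ s) : sqInfDist x s ≤ (x - t) ^ 2 :=
  csInf_le ((s.finite_toSet.image _).bddBelow) (Set.mem_image_of_mem _ ht)

lemma continuous_sqInfDist (hs : s.Nonempty) : Continuous (sqInfDist · s) := by
  simp only [sqInfDist, ← Finset.inf'_eq_csInf_image s hs]
  exact Continuous.finset_inf'_apply hs fun t _ => by fun_prop

lemma sqInfDist_insert (hs : s.Nonempty) (x a : ℝ) :
    sqInfDist x (insert a s) = min ((x - a) ^ 2) (sqInfDist x s) := by
  rw [sqInfDist, Finset.coe_insert, Set.image_insert_eq,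
    csInf_insert ((s.finite_toSet.image _).bddBelow) (hs.to_set.image _)]
  rfl

lemma sqInfDist_insert_of_le_midpoint (ht₀ : t₀ ∈ s) (ha : t₀ ≤ a) (hx : x ≤ (t₀ + a) / 2) :
    sqInfDist x (insert a s) = sqInfDist x s := by
  rw [sqInfDist_insert ⟨t₀, ht₀⟩, min_eq_right]
  exact (sqInfDist_le ht₀).trans (by nlinarith)

lemma sqInfDist_insert_of_midpoint_le (ht₀ : t₀ ∈ s) (hmax : ∀ t ∈ s, t ≤ t₀) (ha : t₀ ≤ a)
    (hx : (t₀ + a) / 2 ≤ x) : sqInfDist x (insert a s) = (x - a) ^ 2 := by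
  rw [sqInfDist_insert ⟨t₀, ht₀⟩, min_eq_left]
  refine le_csInf ((Finset.coe_nonempty.2 ⟨t₀, ht₀⟩).image _) ?_
  rintro _ ⟨t, ht, rfl⟩
  nlinarith [hmax t ht]

lemma integral_sqInfDist_insert (ht₀ : t₀ ∈ s) (hmax : ∀ t ∈ s, t ≤ t₀) (ha : t₀ ≤ a)
    {u c v : ℝ} (huc : u ≤ c) (hcv : c ≤ v) (hlo : ∀ x ∈ Ioc u c, x ≤ (t₀ + a) / 2)
    (hhi : ∀ x ∈ Ioc c v, (t₀ + a) / 2 ≤ x) :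
    ∫ x in u..v, sqInfDist x (insert a s)
      = (∫ x in u..c, sqInfDist x s) + ∫ x in c..v, (x - a) ^ 2 := by
  have hcont := continuous_sqInfDist (s.insert_nonempty a)
  rw [← intervalIntegral.integral_add_adjacent_intervals
    (hcont.intervalIntegrable u c) (hcont.intervalIntegrable c v)]
  congr 1 <;> refine intervalIntegral.integral_congr_ae (Eventually.of_forall fun x hx => ?_)
  · rw [uIoc_of_le huc] at hx
    exact sqInfDist_insert_of_le_midpoint ht₀ ha (hlo x hx)
  · rw [uIoc_of_le hcv] at hx
    exact sqInfDist_insert_of_midpoint_le ht₀ hmax ha (hhi x hx)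

end sqInfDist

lemma le_integral_sqInfDist (s : Finset ℝ) {u : ℝ} (hs : ∃ t ∈ s, t ≤ u) {v : ℝ}
    (huv : u ≤ v) :
    (v - u) ^ 3 / (3 * (2 * (#s : ℝ) - 1) ^ 2) ≤ ∫ x in u..v, sqInfDist x s := by
  classical
  induction s using Finset.induction_on_max generalizing v with
  | empty => simp at hs
  | insert a s hlt ih =>
    rcases s.eq_empty_or_nonempty with rfl | hne
    · obtain ⟨t, ht, htu⟩ := hs
      rw [insert_empty_eq, Finset.mem_singleton] at ht
      subst ht
      simp only [insert_empty_eq, Finset.card_singleton, sqInfDist_singleton]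
      norm_num
      exact div_three_le_integral_sub_sq htu huv
    have hsu : ∃ t ∈ s, t ≤ u := by
      obtain ⟨t, ht, htu⟩ := hs
      rcases Finset.mem_insert.1 ht with rfl | ht
      · exact ⟨s.min' hne, s.min'_mem hne, (hlt _ (s.min'_mem hne)).le.trans htu⟩
      · exact ⟨t, ht, htu⟩
    set t₀ := s.max' hne
    set c := max u (min ((t₀ + a) / 2) v)
    have huc : u ≤ c := le_max_left _ _
    have hcv : c ≤ v := max_le huv (min_le_right _ _)
    rw [integral_sqInfDist_insert (s.max'_mem hne) (s.le_max' · ·) (hlt _ (s.max'_mem hne)).le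
      huc hcv
      (fun x hx => ((le_max_iff.1 hx.2).resolve_left hx.1.not_ge).trans (min_le_left _ _))
      (fun x hx => ((min_lt_iff.1 ((le_max_right _ _).trans_lt hx.1)).resolve_right
        hx.2.not_gt).le)]
    have hA : (0 : ℝ) < 2 * #s - 1 := by
      have : (1 : ℝ) ≤ #s := by exact_mod_cast hne.card_pos
      linarith
    rw [Finset.card_insert_of_notMem fun ha => (hlt a ha).false, Nat.cast_add_one]
    calc (v - u) ^ 3 / (3 * (2 * (#s + 1 : ℝ) - 1) ^ 2)
        = ((c - u) + (v - c)) ^ 3 / ((2 * #s - 1) + 2) ^ 2 / 3 := by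
          rw [div_div, mul_comm]; ring_nf
      _ ≤ ((c - u) ^ 3 / (2 * #s - 1) ^ 2 + (v - c) ^ 3 / 2 ^ 2) / 3 := by
        gcongr
        exact cube_div_sq_add_le hA two_pos (sub_nonneg.2 huc) (sub_nonneg.2 hcv)
      _ = (c - u) ^ 3 / (3 * (2 * #s - 1) ^ 2) + (v - c) ^ 3 / 12 := by field_simp; ring
      _ ≤ _ := add_le_add (ih hsu huc) (div_twelve_le_integral_sub_sq a hcv)

lemma integral_sqInfDist_grid (a : ℝ) {r : ℝ} (hr : 0 ≤ r) {n : ℕ} (hn : 1 ≤ n) :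
    ∫ x in a..a + (2 * n - 1) * r,
        sqInfDist x ((Finset.Icc 1 n).image fun j : ℕ => a + 2 * ((j : ℝ) - 1) * r)
      = (2 * n - 1) * r ^ 3 / 3 := by
  set f := fun j : ℕ => a + 2 * ((j : ℝ) - 1) * r
  induction n, hn using Nat.le_induction with
  | base =>
    simp only [Finset.Icc_self, Finset.image_singleton, f, sqInfDist_singleton, integral_sub_sq]
    ring
  | succ m hm ih =>
    have hmr : (1 : ℝ) ≤ m := by exact_mod_cast hm
    have hmax : ∀ t ∈ (Finset.Icc 1 m).image f, t ≤ f m := by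
      simp only [Finset.mem_image, Finset.mem_Icc]
      rintro _ ⟨j, ⟨-, hj⟩, rfl⟩
      have : (j : ℝ) ≤ m := by exact_mod_cast hj
      simp only [f]
      nlinarith
    have hmid : (f m + f (m + 1)) / 2 = a + (2 * m - 1) * r := by
      simp only [f]; push_cast; ring
    rw [← Finset.insert_Icc_right_eq_Icc_add_one (by omega), Finset.image_insert,
      integral_sqInfDist_insert (Finset.mem_image_of_mem _ (Finset.right_mem_Icc.2 hm)) hmax
        (by simp only [f]; push_cast; nlinarith) (c := a + (2 * m - 1) * r) (by nlinarith)
        (by push_cast; nlinarith) (fun x hx => hmid ▸ hx.2) (fun x hx => hmid ▸ hx.1.le),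
      ih, integral_sub_sq]
    simp only [f]
    push_cast
    ring

lemma distortion_uniformOn {a b : ℝ} (hab : a ≤ b) (s : Finset ℝ) :
    distortion (uniformOn a b) s = (b - a)⁻¹ * ∫ x in a..b, sqInfDist x s := by
  rw [distortion, uniformOn, integral_smul_measure, ENNReal.toReal_inv,
    ENNReal.toReal_ofReal (sub_nonneg.2 hab), smul_eq_mul, intervalIntegral.integral_of_le hab,
    ← integral_Icc_eq_integral_Ioc]
  rfl

lemma le_distortion_uniformOn {a b : ℝ} (hab : a < b) {s : Finset ℝ} (ha : a ∈ s) {n : ℕ}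
    (hn : #s ≤ n) : (b - a) ^ 2 / (3 * (2 * (n : ℝ) - 1) ^ 2) ≤ distortion (uniformOn a b) s := by
  have hs : (1 : ℝ) ≤ #s := by exact_mod_cast Finset.card_pos.2 ⟨a, ha⟩
  have hsn : (#s : ℝ) ≤ n := by exact_mod_cast hn
  have hA : 0 < 2 * (#s : ℝ) - 1 := by linarith
  rw [distortion_uniformOn hab.le]
  calc (b - a) ^ 2 / (3 * (2 * (n : ℝ) - 1) ^ 2)
      ≤ (b - a) ^ 2 / (3 * (2 * (#s : ℝ) - 1) ^ 2) := by gcongr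
    _ = (b - a)⁻¹ * ((b - a) ^ 3 / (3 * (2 * (#s : ℝ) - 1) ^ 2)) := by
      field_simp [(sub_pos.2 hab).ne']
    _ ≤ _ := by
      have hba : 0 ≤ b - a := (sub_pos.2 hab).le
      gcongr
      exact le_integral_sqInfDist s ⟨a, ha, le_rfl⟩ hab.le

lemma distortion_uniformOn_grid {a b : ℝ} (hab : a < b) {n : ℕ} (hn : 1 ≤ n) :
    distortion (uniformOn a b)
        ((fun j : ℕ => a + 2 * ((j : ℝ) - 1) * (b - a) / (2 * (n : ℝ) - 1)) '' Set.Icc 1 n)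
      = (b - a) ^ 2 / (3 * (2 * (n : ℝ) - 1) ^ 2) := by
  have hN : (0 : ℝ) < 2 * n - 1 := by
    have : (1 : ℝ) ≤ n := by exact_mod_cast hn
    linarith
  set r := (b - a) / (2 * (n : ℝ) - 1)
  have hr : 0 < r := div_pos (sub_pos.2 hab) hN
  have hb : b = a + (2 * n - 1) * r := by simp only [r]; field_simp; ring
  have hgrid : (fun j : ℕ => a + 2 * ((j : ℝ) - 1) * (b - a) / (2 * (n : ℝ) - 1)) '' Set.Icc 1 n
      = ↑((Finset.Icc 1 n).image fun j : ℕ => a + 2 * ((j : ℝ) - 1) * r) := by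
    rw [Finset.coe_image, Finset.coe_Icc]
    congr 1
    ext j
    simp only [r]
    ring
  rw [hgrid, distortion_uniformOn hab.le, hb, integral_sqInfDist_grid a hr.le hn]
  field_simp
  ring

/-- Conditional quantization for the uniform distribution on `[a,b]` with conditional set `{a}`:
the error is `(b-a)²/(3(2n-1)²)`, attained by `{a + 2(j-1)(b-a)/(2n-1) : 1 ≤ j ≤ n}`. -/
theorem stmt3 (a b : ℝ) (hab : a < b) (n : ℕ) (hn : 1 ≤ n) :
    condQuantError (uniformOn a b) {a} n = (b - a) ^ 2 / (3 * (2 * (n : ℝ) - 1) ^ 2)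
    ∧ distortion (uniformOn a b)
        ((fun j : ℕ => a + 2 * ((j : ℝ) - 1) * (b - a) / (2 * (n : ℝ) - 1)) '' Set.Icc 1 n)
      = (b - a) ^ 2 / (3 * (2 * (n : ℝ) - 1) ^ 2) := by
  set f := fun j : ℕ => a + 2 * ((j : ℝ) - 1) * (b - a) / (2 * (n : ℝ) - 1)
  refine ⟨IsLeast.csInf_eq ⟨?_, ?_⟩, distortion_uniformOn_grid hab hn⟩
  · refine ⟨f '' Set.Icc 2 n, (Set.finite_Icc 2 n).image f, ?_, ?_⟩
    · refine (Set.ncard_image_le (Set.finite_Icc 2 n)).trans ?_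
      rw [Set.ncard_singleton, ← Finset.coe_Icc, Set.ncard_coe_finset, Nat.card_Icc]
      omega
    · have hIcc : Set.Icc 1 n = Set.Icc 2 n ∪ {1} := by
        ext j
        simp only [Set.mem_Icc, Set.mem_union, Set.mem_singleton_iff]
        omega
      rw [← distortion_uniformOn_grid hab hn, hIcc, Set.image_union, Set.image_singleton]
      simp [f]
  · rintro _ ⟨α, hα, hcard, rfl⟩
    rw [Set.ncard_singleton, Set.ncard_eq_toFinset_card α hα] at hcard
    have hs : α ∪ {a} = ↑(insert a (Set.Finite.toFinset hα)) := by simp [Set.union_singleton]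
    rw [hs]
    exact le_distortion_uniformOn hab (Finset.mem_insert_self _ _)
      ((Finset.card_insert_le _ _).trans (by omega))
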